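/- In the Stalemate causal Kripke setting, each of the primitive events (p,w0) = 0, (q,w0) = 1, (p,w1) = 1, and (p,w2) = 1 is an actual cause of r = 1 at world w0 by all three HP definitions (original, updated, and modified). -/

import Mathlib

open Classical

noncomputable section

/-- A causal Kripke model `K = (S, W, Rel, F)`: the signature `S` consists of the disjoint
finite sets `Exo` of exogenous and `Endo` of endogenous variables together with a finite
nonempty range `range Γ w` of possible values for each variable `Γ` at each world `w`;
`World` is a finite set of possible worlds, `Rel` is the accessibility relation, and `eqs`
assigns to each endogenous variable `X` and world `w` a structural equation computing the
value of `(X,w)` from the values of all the other variables (it does not depend on the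
coordinate `(X,w)` itself, and its value lies in the range of `(X,w)`). -/
structure CKM where
  Exo : Type
  Endo : Type
  World : Type
  Val : Type
  exoFin : Fintype Exo
  endoFin : Fintype Endo
  worldFin : Fintype World
  Rel : World → World → Prop
  range : (Exo ⊕ Endo) → World → Finset Val
  range_nonempty : ∀ Γ w, (range Γ w).Nonempty
  eqs : Endo → World → (((Exo ⊕ Endo) × World) → Val) → Val
  eqs_mem : ∀ X w g, eqs X w g ∈ range (Sum.inr X) w
  eqs_indep : ∀ X w g g',
    (∀ p, p ≠ (Sum.inr X, w) → g p = g' p) → eqs X w g = eqs X w g'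

namespace CKM

/-- A context assigns to every exogenous variable at every world a value in its range. -/
def ValidContext (K : CKM) (t : K.Exo → K.World → K.Val) : Prop :=
  ∀ U w, t U w ∈ K.range (Sum.inl U) w

/-- `v` is a solution of the causal Kripke setting `(K, t)`: it agrees with the context `t`
on all exogenous variables and satisfies all structural equations. -/
def Solves (K : CKM) (t : K.Exo → K.World → K.Val)
    (v : ((K.Exo ⊕ K.Endo) × K.World) → K.Val) : Prop :=
  (∀ U w, v (Sum.inl U, w) = t U w) ∧ ∀ X w, v (Sum.inr X, w) = K.eqs X w v

/-- The variable `p` influences the (endogenous) variable `q` (i.e. `q` directly causally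
depends on `p`): some change in the value of `p`, keeping all other variables fixed
(within their ranges), changes the value of the structural equation of `q`. -/
def Influences (K : CKM) (p q : (K.Exo ⊕ K.Endo) × K.World) : Prop :=
  ∃ X w, q = (Sum.inr X, w) ∧
    ∃ g g', (∀ r, g r ∈ K.range r.1 r.2) ∧ (∀ r, g' r ∈ K.range r.1 r.2) ∧
      (∀ r, r ≠ p → g r = g' r) ∧ K.eqs X w g ≠ K.eqs X w g'

/-- A causal Kripke model is recursive if it contains no cyclic dependencies. -/
def Recursive (K : CKM) : Prop :=
  ∀ p, ¬ Relation.TransGen K.Influences p p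

/-- The causal Kripke model obtained from `K` by the intervention setting the variables in
`dom` to the values prescribed by `val`. -/
def doInt (K : CKM) (dom : Finset (K.Endo × K.World)) (val : K.Endo × K.World → K.Val) :
    CKM :=
  { K with
    eqs := fun X w g =>
      if (X, w) ∈ dom ∧ val (X, w) ∈ K.range (Sum.inr X) w then val (X, w)
      else K.eqs X w g
    eqs_mem := by
      intro X w g
      by_cases h : (X, w) ∈ dom ∧ val (X, w) ∈ K.range (Sum.inr X) w
      · simp only [if_pos h]; exact h.2
      · simp only [if_neg h]; exact K.eqs_mem X w g
    eqs_indep := by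
      intro X w g g' hgg'
      by_cases h : (X, w) ∈ dom ∧ val (X, w) ∈ K.range (Sum.inr X) w
      · simp only [if_pos h]
      · simp only [if_neg h]; exact K.eqs_indep X w g g' hgg' }

end CKM

/-- Events (modal-Boolean combinations of primitive events): primitive events `X = x` and
`(X,w) = x`, negation, conjunction and the modal operator `□`. -/
inductive Event (E W V : Type) : Type
  | eq : E → V → Event E W V
  | eqAt : E → W → V → Event E W V
  | neg : Event E W V → Event E W V
  | conj : Event E W V → Event E W V → Event E W V
  | box : Event E W V → Event E W V

namespace CKM

/-- Satisfaction of an event at a world of `K`, relative to a solution `v` of the setting. -/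
def SatE (K : CKM) (v : ((K.Exo ⊕ K.Endo) × K.World) → K.Val) :
    K.World → Event K.Endo K.World K.Val → Prop
  | w, .eq X x => v (Sum.inr X, w) = x
  | _, .eqAt X w' x => v (Sum.inr X, w') = x
  | w, .neg α => ¬ SatE K v w α
  | w, .conj α β => SatE K v w α ∧ SatE K v w β
  | w, .box α => ∀ w', K.Rel w w' → SatE K v w' α

/-- `(K,t,w) ⊩ [dom ← val] α` : the event `α` holds at `w` in the model obtained from the
intervention `dom ← val`, in the context `t`. -/
def SatI (K : CKM) (t : K.Exo → K.World → K.Val) (dom : Finset (K.Endo × K.World))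
    (val : K.Endo × K.World → K.Val) (w : K.World) (α : Event K.Endo K.World K.Val) :
    Prop :=
  ∀ v, (K.doInt dom val).Solves t v → (K.doInt dom val).SatE v w α

/-- AC1 : `α` actually holds at `w`, and each conjunct `(X_i, w_j) = y_ij` of `Y = y`
actually holds. -/
def AC1 (K : CKM) (t : K.Exo → K.World → K.Val) (w : K.World)
    (Y : Finset (K.Endo × K.World)) (y : K.Endo × K.World → K.Val)
    (α : Event K.Endo K.World K.Val) : Prop :=
  ∀ v, K.Solves t v → K.SatE v w α ∧ ∀ p ∈ Y, v (Sum.inr p.1, p.2) = y p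

/-- AC2a together with AC2bᵒ (they share the partition `Z`, `N` and the setting `n`):
there is a partition of the endogenous variables into `Z ⊇ Y` and `N` and settings `y'`
of `Y` and `n` of `N` such that `(K,t,w) ⊩ [Y ← y', N ← n] ¬α`, and, where `z*` are the
actual values of the variables of `Z`, for every subset `Z'` of `Z \ Y`,
`(K,t,w) ⊩ [Y ← y, N ← n, Z' ← z'*] α`. -/
def AC2o (K : CKM) (t : K.Exo → K.World → K.Val) (w : K.World)
    (Y : Finset (K.Endo × K.World)) (y : K.Endo × K.World → K.Val)
    (α : Event K.Endo K.World K.Val) : Prop :=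
  ∃ Z N : Finset (K.Endo × K.World), ∃ y' n : K.Endo × K.World → K.Val,
    Y ⊆ Z ∧ Disjoint Z N ∧ (∀ p : K.Endo × K.World, p ∈ Z ∨ p ∈ N) ∧
    (∀ p ∈ Y, y' p ∈ K.range (Sum.inr p.1) p.2) ∧
    (∀ p ∈ N, n p ∈ K.range (Sum.inr p.1) p.2) ∧
    K.SatI t (Y ∪ N) (fun p => if p ∈ Y then y' p else n p) w (.neg α) ∧
    ∀ v, K.Solves t v → ∀ Z' ⊆ Z \ Y,
      K.SatI t (Y ∪ N ∪ Z')
        (fun p => if p ∈ Y then y p else if p ∈ N then n p else v (Sum.inr p.1, p.2)) w α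

/-- AC2a together with AC2bᵘ (updated definition): as in `AC2o`, but moreover the
restoration of the actual values `z'*` must keep `α` true for every subset `N'` of `N`. -/
def AC2u (K : CKM) (t : K.Exo → K.World → K.Val) (w : K.World)
    (Y : Finset (K.Endo × K.World)) (y : K.Endo × K.World → K.Val)
    (α : Event K.Endo K.World K.Val) : Prop :=
  ∃ Z N : Finset (K.Endo × K.World), ∃ y' n : K.Endo × K.World → K.Val,
    Y ⊆ Z ∧ Disjoint Z N ∧ (∀ p : K.Endo × K.World, p ∈ Z ∨ p ∈ N) ∧
    (∀ p ∈ Y, y' p ∈ K.range (Sum.inr p.1) p.2) ∧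
    (∀ p ∈ N, n p ∈ K.range (Sum.inr p.1) p.2) ∧
    K.SatI t (Y ∪ N) (fun p => if p ∈ Y then y' p else n p) w (.neg α) ∧
    ∀ v, K.Solves t v → ∀ Z' ⊆ Z \ Y, ∀ N' ⊆ N,
      K.SatI t (Y ∪ N' ∪ Z')
        (fun p => if p ∈ Y then y p else if p ∈ N' then n p else v (Sum.inr p.1, p.2)) w α

/-- AC2aᵐ (modified definition): there are a set `N` of endogenous variables and a setting
`y'` of the variables in `Y` such that, where `n*` are the actual values of the variables
in `N`, `(K,t,w) ⊩ [Y ← y', N ← n*] ¬α`. -/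
def AC2m (K : CKM) (t : K.Exo → K.World → K.Val) (w : K.World)
    (Y : Finset (K.Endo × K.World)) (y : K.Endo × K.World → K.Val)
    (α : Event K.Endo K.World K.Val) : Prop :=
  ∃ N : Finset (K.Endo × K.World), ∃ y' : K.Endo × K.World → K.Val,
    (∀ p ∈ Y, y' p ∈ K.range (Sum.inr p.1) p.2) ∧
    ∀ v, K.Solves t v →
      K.SatI t (Y ∪ N)
        (fun p => if p ∈ Y then y' p else v (Sum.inr p.1, p.2)) w (.neg α)

/-- `Y = y` is an actual cause of `α` in `(K,t)` at `w` by the ORIGINAL HP definition. -/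
def IsCauseO (K : CKM) (t : K.Exo → K.World → K.Val) (w : K.World)
    (Y : Finset (K.Endo × K.World)) (y : K.Endo × K.World → K.Val)
    (α : Event K.Endo K.World K.Val) : Prop :=
  K.AC1 t w Y y α ∧ K.AC2o t w Y y α ∧
    ∀ Y' ⊂ Y, ∀ y'' : K.Endo × K.World → K.Val,
      ¬ (K.AC1 t w Y' y'' α ∧ K.AC2o t w Y' y'' α)

/-- `Y = y` is an actual cause of `α` in `(K,t)` at `w` by the UPDATED HP definition. -/
def IsCauseU (K : CKM) (t : K.Exo → K.World → K.Val) (w : K.World)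
    (Y : Finset (K.Endo × K.World)) (y : K.Endo × K.World → K.Val)
    (α : Event K.Endo K.World K.Val) : Prop :=
  K.AC1 t w Y y α ∧ K.AC2u t w Y y α ∧
    ∀ Y' ⊂ Y, ∀ y'' : K.Endo × K.World → K.Val,
      ¬ (K.AC1 t w Y' y'' α ∧ K.AC2u t w Y' y'' α)

/-- `Y = y` is an actual cause of `α` in `(K,t)` at `w` by the MODIFIED HP definition. -/
def IsCauseM (K : CKM) (t : K.Exo → K.World → K.Val) (w : K.World)
    (Y : Finset (K.Endo × K.World)) (y : K.Endo × K.World → K.Val)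
    (α : Event K.Endo K.World K.Val) : Prop :=
  K.AC1 t w Y y α ∧ K.AC2m t w Y y α ∧
    ∀ Y' ⊂ Y, ∀ y'' : K.Endo × K.World → K.Val,
      ¬ (K.AC1 t w Y' y'' α ∧ K.AC2m t w Y' y'' α)

/-- `(X,w) = x` is part of a cause of `α` in `(K,t)` at `w'` by the original HP
definition: it is a conjunct of some actual cause `Y = y` of `α` at `w'`. -/
def PartOfCauseO (K : CKM) (t : K.Exo → K.World → K.Val) (w' : K.World)
    (X : K.Endo) (w : K.World) (x : K.Val) (α : Event K.Endo K.World K.Val) : Prop :=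
  ∃ Y y, K.IsCauseO t w' Y y α ∧ (X, w) ∈ Y ∧ y (X, w) = x

/-- `(X,w) = x` is part of a cause of `α` in `(K,t)` at `w'` by the updated HP
definition. -/
def PartOfCauseU (K : CKM) (t : K.Exo → K.World → K.Val) (w' : K.World)
    (X : K.Endo) (w : K.World) (x : K.Val) (α : Event K.Endo K.World K.Val) : Prop :=
  ∃ Y y, K.IsCauseU t w' Y y α ∧ (X, w) ∈ Y ∧ y (X, w) = x

/-- `(X,w) = x` is part of a cause of `α` in `(K,t)` at `w'` by the modified HP
definition. -/
def PartOfCauseM (K : CKM) (t : K.Exo → K.World → K.Val) (w' : K.World)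
    (X : K.Endo) (w : K.World) (x : K.Val) (α : Event K.Endo K.World K.Val) : Prop :=
  ∃ Y y, K.IsCauseM t w' Y y α ∧ (X, w) ∈ Y ∧ y (X, w) = x

end CKM

/-- `Y = y` is an actual cause of `α` in `(K,t)` at `w` by all three HP definitions
(original, updated, and modified). -/
def CKM.IsCauseAll (K : CKM) (t : K.Exo → K.World → K.Val) (w : K.World)
    (Y : Finset (K.Endo × K.World)) (y : K.Endo × K.World → K.Val)
    (α : Event K.Endo K.World K.Val) : Prop :=
  K.IsCauseO t w Y y α ∧ K.IsCauseU t w Y y α ∧ K.IsCauseM t w Y y α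

/-- Exogenous variables of the Stalemate example: `U = (U1, U2)`. -/
inductive StExo : Type
  | u1 | u2
deriving DecidableEq

instance : Fintype StExo :=
  ⟨{StExo.u1, StExo.u2}, fun x => by cases x <;> simp⟩

/-- Endogenous variables of the Stalemate example: `p` = "the king is in check",
`q` = "the king and the knight are the only pieces that can move", `r` = "the player is
forced to move the knight". -/
inductive StEndo : Type
  | p | q | r
deriving DecidableEq

instance : Fintype StEndo :=
  ⟨{StEndo.p, StEndo.q, StEndo.r}, fun x => by cases x <;> simp⟩

/-- The Stalemate causal Kripke model: worlds `w0, w1, w2` (as `Fin 3`), accessibility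
`Rel = {(w0,w1), (w0,w2)}`, binary variables with `(p,w) = (U1,w)`, `(q,w) = (U2,w)` and
`r = ¬p ∧ q ∧ □p` at every world. -/
@[reducible] def stalemate : CKM where
  Exo := StExo
  Endo := StEndo
  World := Fin 3
  Val := Bool
  exoFin := inferInstance
  endoFin := inferInstance
  worldFin := inferInstance
  Rel := fun a b => a = 0 ∧ b ≠ 0
  range := fun _ _ => Finset.univ
  range_nonempty := fun _ _ => ⟨true, Finset.mem_univ _⟩
  eqs := fun X w g =>
    match X with
    | .p => g (Sum.inl StExo.u1, w)
    | .q => g (Sum.inl StExo.u2, w)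
    | .r =>
        if g (Sum.inr StEndo.p, w) = false ∧ g (Sum.inr StEndo.q, w) = true ∧
            ∀ w' : Fin 3, ((w : Fin 3) = 0 ∧ w' ≠ 0) → g (Sum.inr StEndo.p, w') = true
        then true else false
  eqs_mem := fun _ _ _ => Finset.mem_univ _
  eqs_indep := by
    intro X w g g' h
    cases X with
    | p => exact h (Sum.inl StExo.u1, w) (by simp)
    | q => exact h (Sum.inl StExo.u2, w) (by simp)
    | r =>
      refine if_congr ?_ rfl rfl
      have hp : ∀ w' : Fin 3, g (Sum.inr StEndo.p, w') = g' (Sum.inr StEndo.p, w') :=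
        fun w' => h _ (by simp)
      have hq : g (Sum.inr StEndo.q, w) = g' (Sum.inr StEndo.q, w) := h _ (by simp)
      simp only [hp, hq]

/-- The context of the Stalemate example: `U = (U1,U2)` is set to `(0,1)` at `w0`,
`(1,1)` at `w1` and `(1,0)` at `w2`. -/
def stalemateCtx : StExo → Fin 3 → Bool := fun U w =>
  match U with
  | StExo.u1 => decide (w ≠ 0)
  | StExo.u2 => decide (w = 0 ∨ w = 1)


/-!
Every intervention on the Stalemate setting has exactly one solution: `p` and `q` copy the
context unless intervened on, and `r` is computed from them. Each of the four events is a
but-for cause of `r = 1` at `w0`, since flipping it alone makes `r = 0` there. Taking `Z` to be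
all variables and `N = ∅`, this one flip witnesses AC2 in all three versions: AC2b then only
re-imposes actual values, which by uniqueness reproduces the actual solution. Minimality is
automatic for a single conjunct, because for `Y = ∅` the interventions of AC2a and AC2b
coincide, and the one of AC2aᵐ uses only actual values.
-/

namespace CKM

variable {K : CKM} {t : K.Exo → K.World → K.Val} {w : K.World}
  {α : Event K.Endo K.World K.Val} {v : (K.Exo ⊕ K.Endo) × K.World → K.Val}
  {dom : Finset (K.Endo × K.World)} {val val' : K.Endo × K.World → K.Val}

def Solvable (K : CKM) (t : K.Exo → K.World → K.Val) : Prop :=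
  ∀ dom val, ∃ v, (K.doInt dom val).Solves t v

def UniquelySolvable (K : CKM) (t : K.Exo → K.World → K.Val) : Prop :=
  ∀ dom val, ∃! v, (K.doInt dom val).Solves t v

theorem UniquelySolvable.solvable (h : K.UniquelySolvable t) : K.Solvable t :=
  fun dom val => (h dom val).exists

theorem solves_doInt_iff : (K.doInt dom val).Solves t v ↔
    (∀ U w, v (Sum.inl U, w) = t U w) ∧ ∀ (X : K.Endo) (w : K.World),
      v (Sum.inr X, w) =
        if (X, w) ∈ dom ∧ val (X, w) ∈ K.range (Sum.inr X) w then val (X, w) else K.eqs X w v :=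
  Iff.rfl

theorem solves_doInt_congr (h : ∀ p ∈ dom, val p = val' p) :
    (K.doInt dom val).Solves t v ↔ (K.doInt dom val').Solves t v := by
  rw [solves_doInt_iff, solves_doInt_iff]
  refine and_congr Iff.rfl (forall₂_congr fun X w => ?_)
  by_cases hX : (X, w) ∈ dom <;> simp [hX, h]

theorem solves_doInt_empty : (K.doInt ∅ val).Solves t v ↔ K.Solves t v := by
  simp [Solves, doInt]

theorem satE_doInt (w : K.World) (α : Event K.Endo K.World K.Val) :
    (K.doInt dom val).SatE v w α ↔ K.SatE v w α := by
  induction α generalizing w with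
  | eq => rfl
  | eqAt => rfl
  | neg α ih => exact not_congr (ih w)
  | conj α β ihα ihβ => exact and_congr (ihα w) (ihβ w)
  | box α ih => exact forall₂_congr fun w' _ => ih w'

theorem satI_congr (h : ∀ p ∈ dom, val p = val' p) :
    K.SatI t dom val w α ↔ K.SatI t dom val' w α :=
  forall_congr' fun _ =>
    imp_congr (solves_doInt_congr h) ((satE_doInt w α).trans (satE_doInt w α).symm)

theorem Solves.doInt_self (hv : K.Solves t v) (dom : Finset (K.Endo × K.World)) :
    (K.doInt dom fun p => v (Sum.inr p.1, p.2)).Solves t v := by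
  refine ⟨hv.1, fun X w => ?_⟩
  show v _ = if _ then _ else _
  split_ifs
  · rfl
  · exact hv.2 X w

theorem AC2u.ac2o {Y : Finset (K.Endo × K.World)} {y : K.Endo × K.World → K.Val}
    (h : K.AC2u t w Y y α) : K.AC2o t w Y y α := by
  obtain ⟨Z, N, y', n, hYZ, hZN, hcover, hy', hn, hneg, hpos⟩ := h
  exact ⟨Z, N, y', n, hYZ, hZN, hcover, hy', hn, hneg,
    fun v hv Z' hZ' => hpos v hv Z' hZ' N Finset.Subset.rfl⟩

theorem not_AC2o_empty (h : K.Solvable t) {y : K.Endo × K.World → K.Val} :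
    ¬ K.AC2o t w ∅ y α := by
  rintro ⟨Z, N, y', n, -, -, -, -, -, hneg, hpos⟩
  obtain ⟨v, hv⟩ := h ∅ y
  obtain ⟨u, hu⟩ := h (∅ ∪ N) fun p =>
    if p ∈ (∅ : Finset (K.Endo × K.World)) then y' p else n p
  have hpos' := hpos v (solves_doInt_empty.1 hv) ∅ (Finset.empty_subset _)
  rw [Finset.union_empty] at hpos'
  have hα := hpos' u ((solves_doInt_congr fun p hp => by simp_all).1 hu)
  exact hneg u hu ((satE_doInt w α).2 ((satE_doInt w α).1 hα))

theorem not_AC2m_empty (hv : K.Solves t v) (hα : K.SatE v w α)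
    {y : K.Endo × K.World → K.Val} : ¬ K.AC2m t w ∅ y α := by
  rintro ⟨N, y', -, hm⟩
  have hsol : (K.doInt (∅ ∪ N) fun p =>
      if p ∈ (∅ : Finset (K.Endo × K.World)) then y' p else v (Sum.inr p.1, p.2)).Solves t v :=
    (solves_doInt_congr fun p _ => by simp).2 (hv.doInt_self _)
  exact hm v hv v hsol ((satE_doInt w α).2 hα)

theorem UniquelySolvable.satI_of_solves (h : K.UniquelySolvable t) (hv : K.Solves t v)
    (hval : ∀ p ∈ dom, val p = v (Sum.inr p.1, p.2)) (hα : K.SatE v w α) :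
    K.SatI t dom val w α := by
  intro u hu
  have hv' : (K.doInt dom val).Solves t v := (solves_doInt_congr hval).2 (hv.doInt_self dom)
  rw [(h dom val).unique hu hv']
  exact (satE_doInt w α).2 hα

section Flip

variable {Y : Finset (K.Endo × K.World)} {y y' : K.Endo × K.World → K.Val}

theorem ac2u_of_satI_neg (h : K.UniquelySolvable t) (hac1 : K.AC1 t w Y y α)
    (hy' : ∀ p ∈ Y, y' p ∈ K.range (Sum.inr p.1) p.2) (hflip : K.SatI t Y y' w (.neg α)) :
    K.AC2u t w Y y α := by
  let := K.endoFin
  let := K.worldFin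
  refine ⟨Finset.univ, ∅, y', y', Finset.subset_univ Y, Finset.disjoint_empty_right _,
    fun p => Or.inl (Finset.mem_univ p), hy', by simp, ?_, ?_⟩
  · rw [Finset.union_empty]
    exact (satI_congr fun p hp => if_pos hp).2 hflip
  · intro v hv Z' _ N' hN'
    rw [Finset.subset_empty.1 hN']
    obtain ⟨hα, hY⟩ := hac1 v hv
    refine h.satI_of_solves hv (fun p _ => ?_) hα
    by_cases hp : p ∈ Y
    · simp [hp, hY p hp]
    · simp [hp]

theorem ac2m_of_satI_neg (hy' : ∀ p ∈ Y, y' p ∈ K.range (Sum.inr p.1) p.2)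
    (hflip : K.SatI t Y y' w (.neg α)) : K.AC2m t w Y y α :=
  ⟨∅, y', hy', fun _ _ => by
    rw [Finset.union_empty]
    exact (satI_congr fun p hp => if_pos hp).2 hflip⟩

end Flip

theorem isCauseAll_singleton (h : K.UniquelySolvable t) {c : K.Endo × K.World}
    {y y' : K.Endo × K.World → K.Val} (hac1 : K.AC1 t w {c} y α)
    (hy' : y' c ∈ K.range (Sum.inr c.1) c.2) (hflip : K.SatI t {c} y' w (.neg α)) :
    K.IsCauseAll t w {c} y α := by
  have hy'c : ∀ p ∈ ({c} : Finset _), y' p ∈ K.range (Sum.inr p.1) p.2 := by simpa using hy'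
  have hu := ac2u_of_satI_neg h hac1 hy'c hflip
  obtain ⟨v, hv⟩ := h.solvable ∅ y
  replace hv := solves_doInt_empty.1 hv
  have hmin : ∀ {P : Finset (K.Endo × K.World) → (K.Endo × K.World → K.Val) → Prop},
      (∀ y'', ¬ P ∅ y'') → ∀ Y' ⊂ {c}, ∀ y'', ¬ P Y' y'' :=
    fun hP Y' hY' => Finset.ssubset_singleton_iff.1 hY' ▸ hP
  exact ⟨⟨hac1, hu.ac2o, hmin fun _ hc => not_AC2o_empty h.solvable hc.2⟩,
    ⟨hac1, hu, hmin fun _ hc => not_AC2o_empty h.solvable hc.2.ac2o⟩,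
    ⟨hac1, ac2m_of_satI_neg hy'c hflip, hmin fun _ hc => not_AC2m_empty hv (hc.1 v hv).1 hc.2⟩⟩

end CKM

namespace Stalemate

variable (dom : Finset (StEndo × Fin 3)) (val : StEndo × Fin 3 → Bool)

def override (X : StEndo) (w : Fin 3) (b : Bool) : Bool :=
  if (X, w) ∈ dom then val (X, w) else b

def pValue (w : Fin 3) : Bool := override dom val .p w (stalemateCtx .u1 w)

def qValue (w : Fin 3) : Bool := override dom val .q w (stalemateCtx .u2 w)

def solution : (StExo ⊕ StEndo) × Fin 3 → Bool
  | (.inl U, w) => stalemateCtx U w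
  | (.inr .p, w) => pValue dom val w
  | (.inr .q, w) => qValue dom val w
  | (.inr .r, w) => override dom val .r w
      (if pValue dom val w = false ∧ qValue dom val w = true ∧
          ∀ w' : Fin 3, (w = 0 ∧ w' ≠ 0) → pValue dom val w' = true
        then true else false)

theorem solves_doInt_iff {v : (StExo ⊕ StEndo) × Fin 3 → Bool} :
    (stalemate.doInt dom val).Solves stalemateCtx v ↔ v = solution dom val := by
  simp only [CKM.solves_doInt_iff, Finset.mem_univ, and_true]
  constructor
  · rintro ⟨hexo, heqs⟩
    have hp : ∀ w, v (.inr .p, w) = pValue dom val w := fun w => by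
      simp [heqs, pValue, override, hexo]
    have hq : ∀ w, v (.inr .q, w) = qValue dom val w := fun w => by
      simp [heqs, qValue, override, hexo]
    funext x
    obtain ⟨U | X, w⟩ := x
    · exact hexo U w
    · cases X
      · exact hp w
      · exact hq w
      · rw [heqs]
        simp [solution, override, hp, hq]
  · rintro rfl
    refine ⟨fun U w => rfl, fun X w => ?_⟩
    cases X <;> simp [solution, pValue, qValue, override]

theorem uniquelySolvable : stalemate.UniquelySolvable stalemateCtx := fun dom val =>
  ⟨solution dom val, (solves_doInt_iff dom val).2 rfl, fun _ => (solves_doInt_iff dom val).1⟩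

abbrev actual : (StExo ⊕ StEndo) × Fin 3 → Bool := solution ∅ fun _ => false

theorem solves_iff {v : (StExo ⊕ StEndo) × Fin 3 → Bool} :
    stalemate.Solves stalemateCtx v ↔ v = actual :=
  CKM.solves_doInt_empty.symm.trans (solves_doInt_iff ∅ _)

theorem isCauseAll_of_flip (c : StEndo × Fin 3) (b : Bool)
    (hactual : actual (Sum.inr c.1, c.2) = b)
    (hflip : solution {c} (fun _ => !b) (Sum.inr .r, 0) = false) :
    stalemate.IsCauseAll stalemateCtx 0 {c} (fun _ => b) (.eq .r true) := by
  refine CKM.isCauseAll_singleton uniquelySolvable (y' := fun _ => !b) ?_ (Finset.mem_univ _) ?_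
  · intro v hv
    rw [solves_iff.1 hv]
    refine ⟨(by decide : actual (Sum.inr .r, 0) = true), ?_⟩
    simpa using hactual
  · intro v hv
    rw [(solves_doInt_iff _ _).1 hv]
    show ¬ solution {c} (fun _ => !b) (Sum.inr .r, 0) = true
    simp [hflip]

end Stalemate

/-- In the Stalemate causal Kripke setting, each of the primitive
events `(p,w0) = 0`, `(q,w0) = 1`, `(p,w1) = 1`, and `(p,w2) = 1` is an actual cause of
`r = 1` at world `w0` by all three HP definitions (original, updated, and modified). -/
theorem stalemate_causes :
    stalemate.IsCauseAll stalemateCtx 0 {(StEndo.p, (0 : Fin 3))} (fun _ => false)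
      (Event.eq StEndo.r true) ∧
    stalemate.IsCauseAll stalemateCtx 0 {(StEndo.q, (0 : Fin 3))} (fun _ => true)
      (Event.eq StEndo.r true) ∧
    stalemate.IsCauseAll stalemateCtx 0 {(StEndo.p, (1 : Fin 3))} (fun _ => true)
      (Event.eq StEndo.r true) ∧
    stalemate.IsCauseAll stalemateCtx 0 {(StEndo.p, (2 : Fin 3))} (fun _ => true)
      (Event.eq StEndo.r true) :=
  ⟨Stalemate.isCauseAll_of_flip _ _ (by decide) (by decide),
    Stalemate.isCauseAll_of_flip _ _ (by decide) (by decide),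
    Stalemate.isCauseAll_of_flip _ _ (by decide) (by decide),
    Stalemate.isCauseAll_of_flip _ _ (by decide) (by decide)⟩
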